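/- Let (f_k)_{k ≥ −1} be an M-sequence, i.e., a sequence of nonnegative integers with f_{−1} = 1 and f_{k−1} ≥ ∂̃_{k+1}(f_k) for all k ≥ 1, and let n ≥ f_0. Then there exists a unique compressed multicomplex Δ̃ on ground set [n] with f_k(Δ̃) = f_k for all k ≥ −1. -/

import Mathlib

open Finset

/-- `IsCascadeRep k r t c` says that `r = ∑_{i=t}^{k} C(c i, i)` is the `k`-th binomial
(cascade/Macaulay) representation of `r`, i.e. `c k > c (k-1) > ⋯ > c t ≥ t ≥ 1`. -/
def IsCascadeRep (k r t : ℕ) (c : ℕ → ℕ) : Prop :=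
  1 ≤ t ∧ t ≤ k ∧ (∀ i, t ≤ i → i < k → c i < c (i + 1)) ∧ t ≤ c t ∧
    r = ∑ i ∈ Finset.Icc t k, (c i).choose i

/-- The value `∑_{i=t}^{k} g (c i) i` computed from the (unique) `k`-th cascade
representation of `r`; by convention `0` if no representation exists (e.g. `r = 0`). -/
noncomputable def cascadeVal (g : ℕ → ℕ → ℕ) (k r : ℕ) : ℕ :=
  sInf {s | ∃ t c, IsCascadeRep k r t c ∧ s = ∑ i ∈ Finset.Icc t k, g (c i) i}

/-- `∂_k(r) = C(r_k, k-1) + ⋯ + C(r_t, t-1)`, with `∂_k(0) = 0`. -/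
noncomputable def partialShadow (k r : ℕ) : ℕ :=
  cascadeVal (fun m i => m.choose (i - 1)) k r

/-- `∂̃_k(r) = C(r_k - 1, k-1) + ⋯ + C(r_t - 1, t-1)`, with `∂̃_k(0) = 0`. -/
noncomputable def partialShadowTilde (k r : ℕ) : ℕ :=
  cascadeVal (fun m i => (m - 1).choose (i - 1)) k r

/-- `r^⟨k⟩ = C(r_k + 1, k+1) + ⋯ + C(r_t + 1, t+1)`, with `0^⟨k⟩ = 0`. -/
noncomputable def upperShadow (k r : ℕ) : ℕ :=
  cascadeVal (fun m i => (m + 1).choose (i + 1)) k r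

/-- A simplicial complex on the ground set `[n] = {1,…,n}`:
a collection of subsets of `[n]` closed under taking subsets. -/
def SimplicialOn (n : ℕ) (Δ : Set (Finset ℕ)) : Prop :=
  (∀ σ ∈ Δ, σ ⊆ Finset.Icc 1 n) ∧ ∀ σ ∈ Δ, ∀ τ, τ ⊆ σ → τ ∈ Δ

/-- The number of faces of `Δ` of cardinality `c` (so `faceCount Δ (k+1) = f_k(Δ)`). -/
noncomputable def faceCount (Δ : Set (Finset ℕ)) (c : ℕ) : ℕ :=
  Set.ncard {σ ∈ Δ | σ.card = c}

/-- The number of faces of the relative complex `Δ \ Γ` of cardinality `c`. -/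
noncomputable def relFaceCount (Δ Γ : Set (Finset ℕ)) (c : ℕ) : ℕ :=
  Set.ncard {σ | σ ∈ Δ ∧ σ ∉ Γ ∧ σ.card = c}

/-- `Δ` is compressed on ground set `[n]`: for each cardinality, its faces of that
cardinality form an initial segment of the reverse lexicographic (colex) order. -/
def IsCompressed (n : ℕ) (Δ : Set (Finset ℕ)) : Prop :=
  ∀ σ τ : Finset ℕ, σ ⊆ Finset.Icc 1 n → τ ∈ Δ → σ.card = τ.card →
    toColex σ ≤ toColex τ → σ ∈ Δ

/-- A multicomplex on `[n]`: a collection of finite multisets with elements in `[n]`,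
closed under taking multisubsets. -/
def MulticomplexOn (n : ℕ) (Δ : Set (Multiset ℕ)) : Prop :=
  (∀ F ∈ Δ, ∀ x ∈ F, x ∈ Finset.Icc 1 n) ∧ ∀ F ∈ Δ, ∀ G, G ≤ F → G ∈ Δ

/-- The number of multisets in `Δ` of cardinality `c`. -/
noncomputable def mFaceCount (Δ : Set (Multiset ℕ)) (c : ℕ) : ℕ :=
  Set.ncard {F ∈ Δ | Multiset.card F = c}

/-- Strict reverse lexicographic comparison of multisets (intended for multisets of
equal cardinality): writing each as a weakly increasing sequence, `F < G` iff at the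
largest position where they differ, `F` has the smaller entry. -/
def MRevLexLT (F G : Multiset ℕ) : Prop :=
  List.Lex (· < ·) (Multiset.sort F (· ≤ ·)).reverse (Multiset.sort G (· ≤ ·)).reverse

/-- A compressed multicomplex on `[n]`: each cardinality layer is an initial segment of
the reverse lexicographic order on multisets of that cardinality with entries in `[n]`. -/
def IsCompressedMulti (n : ℕ) (Δ : Set (Multiset ℕ)) : Prop :=
  ∀ F G : Multiset ℕ, (∀ x ∈ F, x ∈ Finset.Icc 1 n) → G ∈ Δ →
    Multiset.card F = Multiset.card G → (F = G ∨ MRevLexLT F G) → F ∈ Δ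

/-- `Ψ_{j+1} \ Ψ_j` for the relative complex `Δ \ Γ` and the list `L` of facets:
the faces of `Δ \ Γ` contained in the `j`-th facet but in no earlier one. -/
def shellStep (Δ Γ : Set (Finset ℕ)) (L : List (Finset ℕ)) (j : ℕ) : Set (Finset ℕ) :=
  {τ | τ ∈ Δ ∧ τ ∉ Γ ∧ τ ⊆ L.getD j ∅ ∧ ∀ i < j, ¬ τ ⊆ L.getD i ∅}

/-- `L` is a shelling order of the relative simplicial complex `Δ \ Γ`:
it enumerates the inclusion-maximal faces of `Δ \ Γ` without repetition, and at every
step the newly added faces have a unique inclusion-minimal element (equivalently, a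
minimum, as the family is finite). -/
def IsShelling (Δ Γ : Set (Finset ℕ)) (L : List (Finset ℕ)) : Prop :=
  L.Nodup ∧
  (∀ σ : Finset ℕ,
    (σ ∈ Δ ∧ σ ∉ Γ ∧ ∀ τ, τ ∈ Δ → τ ∉ Γ → σ ⊆ τ → σ = τ) ↔ σ ∈ L) ∧
  ∀ j < L.length, ∃ R, R ∈ shellStep Δ Γ L j ∧ ∀ τ ∈ shellStep Δ Γ L j, R ⊆ τ

/-- The map `Φ_d` sending a multiset `F = {b_1 ≤ … ≤ b_k}` (with `k ≤ d`) to the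
`d`-set `{1,…,d−k} ∪ {b_1 + d−k+1, …, b_k + d}`. -/
def PhiBFS (d : ℕ) (F : Multiset ℕ) : Finset ℕ :=
  Finset.Icc 1 (d - Multiset.card F) ∪
    (Finset.univ : Finset (Fin (Multiset.card F))).image
      (fun i : Fin (Multiset.card F) =>
        (Multiset.sort F (· ≤ ·)).getD (i : ℕ) 0 + (d - Multiset.card F) + 1 + (i : ℕ))

/-!
Rank each `k`-multiset by the number of `k`-multisets preceding it in reverse lexicographic
order (`descRank`). This is an order isomorphism from the `k`-multisets on `[n]` onto
`{0, …, C(n + k - 1, k) - 1}`, so each layer of a compressed multicomplex consists of the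
multisets of rank below its size: uniqueness. For existence take these layers. Deleting any
element of a multiset gives rank at most that of deleting its smallest element, and if the
multiset has rank `< r` the latter has rank `< ∂̃ₖ(r)`, read off the cascade of `r`; the
M-sequence condition then makes the layers closed under deletion. The same estimate for
`[n + 1, 1, …, 1]` shows `f_k ≤ C(n + k, k + 1)`, so every prescribed layer fits on `[n]`.
-/

/-- Listing a multiset `b₁ ≤ ⋯ ≤ bₖ` of positive integers decreasingly, its rank is
`∑ᵢ C(bᵢ + i - 2, i)`: the number of `k`-multisets of positive integers preceding it in
reverse lexicographic order. -/
def descRank : List ℕ → ℕ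
  | [] => 0
  | a :: l => (a + l.length - 1).choose (l.length + 1) + descRank l

@[simp] lemma descRank_nil : descRank [] = 0 := rfl

@[simp] lemma descRank_cons (a : ℕ) (l : List ℕ) :
    descRank (a :: l) = (a + l.length - 1).choose (l.length + 1) + descRank l := rfl

lemma descRank_replicate_one (m : ℕ) : descRank (List.replicate m 1) = 0 := by
  induction m with
  | zero => rfl
  | succ m ih => simp [List.replicate_succ, ih]

lemma choose_add_pascal {a : ℕ} (ha : 0 < a) (m : ℕ) :
    (a + m).choose (m + 1) = (a + m - 1).choose m + (a + m - 1).choose (m + 1) := by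
  obtain ⟨b, rfl⟩ := Nat.exists_eq_add_of_lt ha
  simp [Nat.add_right_comm b 1 m, Nat.choose_succ_succ']

lemma descRank_lt_choose {l : List ℕ} {a : ℕ} (ha : 0 < a) (hle : ∀ x ∈ l, x ≤ a) :
    descRank l < (a + l.length - 1).choose l.length := by
  induction l with
  | nil => simp
  | cons b l ih =>
    have hb : (b + l.length - 1).choose (l.length + 1) ≤
        (a + l.length - 1).choose (l.length + 1) :=
      Nat.choose_le_choose _ (by have := hle b (by simp); omega)
    have ih := ih fun x hx => hle x (by simp [hx])
    have := choose_add_pascal ha l.length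
    rw [descRank_cons, List.length_cons, Nat.add_succ_sub_one]
    omega

section DescRank

variable {l l' : List ℕ}

theorem descRank_lt_descRank (h : l < l') (hl : l.Pairwise (· ≥ ·)) (hpos : ∀ x ∈ l, 0 < x)
    (hlen : l.length = l'.length) : descRank l < descRank l' := by
  induction h with
  | nil => simp at hlen
  | @cons a t t' _ ih =>
    simp only [List.pairwise_cons, List.mem_cons, List.length_cons] at hl hpos hlen
    have := ih hl.2 (fun x hx => hpos x (.inr hx)) (by omega)
    simp only [descRank_cons, Nat.add_right_cancel hlen]
    omega
  | @rel a t b t' hab =>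
    simp only [List.pairwise_cons, List.mem_cons, List.length_cons] at hl hpos hlen
    have ha := hpos a (.inl rfl)
    have htail := descRank_lt_choose ha hl.1
    have hhead : (a + t.length).choose (t.length + 1) ≤ (b + t.length - 1).choose (t.length + 1) :=
      Nat.choose_le_choose _ (by omega)
    have := choose_add_pascal ha t.length
    simp only [descRank_cons, ← Nat.add_right_cancel hlen]
    omega

theorem descRank_lt_descRank_iff (hl : l.Pairwise (· ≥ ·)) (hl' : l'.Pairwise (· ≥ ·))
    (hpos : ∀ x ∈ l, 0 < x) (hpos' : ∀ x ∈ l', 0 < x) (hlen : l.length = l'.length) :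
    descRank l < descRank l' ↔ l < l' := by
  refine ⟨fun h => lt_of_not_ge fun h' => ?_, fun h => descRank_lt_descRank h hl hpos hlen⟩
  rcases h'.lt_or_eq with h' | rfl
  · exact (descRank_lt_descRank h' hl' hpos' hlen.symm).not_gt h
  · exact h.false

theorem descRank_le_descRank_iff (hl : l.Pairwise (· ≥ ·)) (hl' : l'.Pairwise (· ≥ ·))
    (hpos : ∀ x ∈ l, 0 < x) (hpos' : ∀ x ∈ l', 0 < x) (hlen : l.length = l'.length) :
    descRank l ≤ descRank l' ↔ l ≤ l' := by
  simpa using (descRank_lt_descRank_iff hl' hl hpos' hpos hlen.symm).not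

theorem descRank_injective (hl : l.Pairwise (· ≥ ·)) (hl' : l'.Pairwise (· ≥ ·))
    (hpos : ∀ x ∈ l, 0 < x) (hpos' : ∀ x ∈ l', 0 < x) (hlen : l.length = l'.length)
    (h : descRank l = descRank l') : l = l' :=
  le_antisymm ((descRank_le_descRank_iff hl hl' hpos hpos' hlen).1 h.le)
    ((descRank_le_descRank_iff hl' hl hpos' hpos hlen.symm).1 h.ge)

end DescRank

theorem exists_descRank_eq {c n m : ℕ} (hm : m < (n + c - 1).choose c) :
    ∃ l : List ℕ, l.Pairwise (· ≥ ·) ∧ (∀ x ∈ l, x ∈ Icc 1 n) ∧ l.length = c ∧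
      descRank l = m := by
  induction c generalizing n m with
  | zero => exact ⟨[], by simp, by simp, rfl, by simp_all⟩
  | succ c ihc =>
    induction n generalizing m with
    | zero => simp at hm
    | succ n ihn =>
      rw [show n + 1 + (c + 1) - 1 = n + c + 1 by omega, Nat.choose_succ_succ'] at hm
      by_cases hlow : m < (n + c).choose (c + 1)
      · obtain ⟨l, hl, hmem, hlen, hrank⟩ := ihn (by rwa [show n + (c + 1) - 1 = n + c by omega])
        refine ⟨l, hl, fun x hx => ?_, hlen, hrank⟩
        have := Finset.mem_Icc.1 (hmem x hx)
        exact Finset.mem_Icc.2 ⟨this.1, by omega⟩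
      · obtain ⟨l, hl, hmem, hlen, hrank⟩ := ihc (n := n + 1) (m := m - (n + c).choose (c + 1))
          (by rw [show n + 1 + c - 1 = n + c by omega]; omega)
        refine ⟨(n + 1) :: l, List.pairwise_cons.2 ⟨fun x hx => ?_, hl⟩, ?_, by simp [hlen], ?_⟩
        · exact (Finset.mem_Icc.1 (hmem x hx)).2
        · simp only [List.mem_cons, forall_eq_or_imp, Finset.mem_Icc]
          exact ⟨by omega, fun x hx => Finset.mem_Icc.1 (hmem x hx)⟩
        · rw [descRank_cons, hlen, hrank, show n + 1 + c - 1 = n + c by omega]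
          omega

lemma tail_le_dropLast {a : ℕ} {l : List ℕ} (hl : (a :: l).Pairwise (· ≥ ·)) :
    l ≤ (a :: l).dropLast := by
  induction l generalizing a with
  | nil => simp
  | cons b l ih =>
    rw [List.dropLast_cons_cons]
    simp only [List.pairwise_cons, List.mem_cons, forall_eq_or_imp] at hl
    rcases hl.1.1.lt_or_eq with hba | rfl
    · exact le_of_lt (List.Lex.rel hba : b :: l < a :: _)
    · exact List.cons_le_cons b (ih (List.pairwise_cons.2 hl.2))

lemma le_dropLast_of_sublist {d e : List ℕ} (hd : d.Pairwise (· ≥ ·)) (he : e.Sublist d)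
    (hlen : e.length + 1 = d.length) : e ≤ d.dropLast := by
  induction d generalizing e with
  | nil => simp at hlen
  | cons a d ih =>
    rcases List.sublist_cons_iff.1 he with he | ⟨e', rfl, he'⟩
    · rw [he.eq_of_length (by simpa using hlen)]
      exact tail_le_dropLast hd
    · have hne : d ≠ [] := by rintro rfl; simp at hlen
      rw [List.dropLast_cons_of_ne_nil hne]
      exact List.cons_le_cons a (ih (List.pairwise_cons.1 hd).2 he' (by simpa using hlen))

namespace IsCascadeRep

variable {k r t : ℕ} {c : ℕ → ℕ}

lemma eq_sum_add_top (h : IsCascadeRep (k + 1) r t c) :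
    r = ∑ i ∈ Icc t k, (c i).choose i + (c (k + 1)).choose (k + 1) := by
  rw [h.2.2.2.2, Finset.sum_Icc_succ_top h.2.1]

lemma of_succ (h : IsCascadeRep (k + 1) r t c) (ht : t ≤ k) :
    IsCascadeRep k (∑ i ∈ Icc t k, (c i).choose i) t c :=
  ⟨h.1, ht, fun i hti hik => h.2.2.1 i hti (by omega), h.2.2.2.1, rfl⟩

lemma choose_top_le (h : IsCascadeRep k r t c) : (c k).choose k ≤ r := by
  rw [h.2.2.2.2]
  exact Finset.single_le_sum (f := fun i => (c i).choose i) (by simp)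
    (Finset.mem_Icc.2 ⟨h.2.1, le_rfl⟩)

lemma lt_choose_succ_top (h : IsCascadeRep k r t c) : r < (c k + 1).choose k := by
  induction k generalizing r with
  | zero => exact absurd h.2.1 (by have := h.1; omega)
  | succ k ih =>
    rw [h.eq_sum_add_top, Nat.choose_succ_succ']
    rcases h.2.1.lt_or_eq with ht | rfl
    · have hlow := ih (h.of_succ (by omega))
      have hmono : (c k + 1).choose k ≤ (c (k + 1)).choose k :=
        Nat.choose_le_choose _ (h.2.2.1 k (by omega) (by omega))
      omega
    · simpa using Nat.choose_pos (by have := h.2.2.2.1; omega)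

end IsCascadeRep

lemma lt_choose_add_succ (r k : ℕ) : r < (r + k + 1).choose (k + 1) := by
  induction k with
  | zero => simp
  | succ k ih =>
    rw [show r + (k + 1) + 1 = r + k + 1 + 1 by omega, Nat.choose_succ_succ']
    omega

lemma exists_choose_le_lt_choose_succ {k r : ℕ} (hr : 1 ≤ r) :
    ∃ a, k + 1 ≤ a ∧ a.choose (k + 1) ≤ r ∧ r < (a + 1).choose (k + 1) := by
  let P : ℕ → Prop := fun a => a.choose (k + 1) ≤ r
  have hPk : P (k + 1) := by simpa [P]
  refine ⟨Nat.findGreatest P (r + k), Nat.le_findGreatest (by omega) hPk,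
    Nat.findGreatest_spec (P := P) (by omega) hPk, ?_⟩
  by_cases ha : Nat.findGreatest P (r + k) + 1 ≤ r + k
  · exact lt_of_not_ge (Nat.findGreatest_is_greatest (P := P) (Nat.lt_succ_self _) ha)
  · exact (lt_choose_add_succ r k).trans_le (Nat.choose_le_choose _ (by omega))

theorem exists_isCascadeRep {k r : ℕ} (hk : 1 ≤ k) (hr : 1 ≤ r) :
    ∃ t c, IsCascadeRep k r t c := by
  induction k, hk using Nat.le_induction generalizing r with
  | base => exact ⟨1, fun _ => r, le_rfl, le_rfl, by omega, hr, by simp⟩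
  | succ k hk ih =>
    obtain ⟨a, hka, hle, hlt⟩ := exists_choose_le_lt_choose_succ (k := k) hr
    rcases hle.lt_or_eq with hle | heq
    · obtain ⟨t, c, hc⟩ := ih (r := r - a.choose (k + 1)) (by omega)
      have htk := hc.2.1
      have hca : c k < a := by
        by_contra! hac
        have := hc.choose_top_le.trans' (Nat.choose_le_choose k hac)
        rw [Nat.choose_succ_succ'] at hlt
        omega
      refine ⟨t, Function.update c (k + 1) a, hc.1, by omega, fun i hti hik => ?_, ?_, ?_⟩
      · rw [Function.update_of_ne (by omega)]
        rcases (Nat.lt_succ_iff.1 hik).lt_or_eq with hik | rfl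
        · rw [Function.update_of_ne (by omega)]
          exact hc.2.2.1 i hti hik
        · simpa using hca
      · rw [Function.update_of_ne (by omega)]
        exact hc.2.2.2.1
      · rw [Finset.sum_Icc_succ_top (by omega), Function.update_self]
        rw [Finset.sum_congr rfl fun i hi => by
          rw [Function.update_of_ne (by have := (Finset.mem_Icc.1 hi).2; omega)], ← hc.2.2.2.2]
        omega
    · exact ⟨k + 1, fun _ => a, by omega, le_rfl, by omega, hka, by simp [heq]⟩

theorem IsCascadeRep.descRank_dropLast_lt {k r t : ℕ} {c : ℕ → ℕ} (h : IsCascadeRep k r t c)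
    {l : List ℕ} (hl : l.Pairwise (· ≥ ·)) (hpos : ∀ x ∈ l, 0 < x) (hlen : l.length = k)
    (hlt : descRank l < r) :
    descRank l.dropLast < ∑ i ∈ Icc t k, (c i - 1).choose (i - 1) := by
  induction k generalizing r l with
  | zero => exact absurd h.2.1 (by have := h.1; omega)
  | succ k ih =>
    obtain _ | ⟨a, l⟩ := l
    · simp at hlen
    simp only [List.length_cons, Nat.add_right_cancel_iff] at hlen
    simp only [List.pairwise_cons, List.mem_cons, forall_eq_or_imp] at hl hpos
    rw [Finset.sum_Icc_succ_top h.2.1, Nat.add_sub_cancel]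
    rw [descRank_cons, hlen] at hlt
    rcases lt_trichotomy (a + k - 1) (c (k + 1)) with hac | hac | hac
    · -- the top term alone of the shadow already exceeds the rank
      have hdrop := descRank_lt_choose (l := (a :: l).dropLast) hpos.1
        fun x hx => (List.mem_cons.1 (List.dropLast_subset _ hx)).elim le_of_eq (hl.1 x)
      rw [List.length_dropLast, List.length_cons, hlen, Nat.add_sub_cancel] at hdrop
      have := Nat.choose_le_choose k (show a + k - 1 ≤ c (k + 1) - 1 by omega)
      omega
    · have hlow := h.eq_sum_add_top
      rw [hac] at hlt
      -- same top term: recurse on the rest of the cascade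
      rcases h.2.1.lt_or_eq with ht | rfl
      · have ht1 := h.1
        have hne : l ≠ [] := List.ne_nil_of_length_pos (by omega)
        have := ih (h.of_succ (by omega)) hl.2 hpos.2 hlen (by omega)
        rw [List.dropLast_cons_of_ne_nil hne, descRank_cons, List.length_dropLast, hlen,
          show a + (k - 1) - 1 = c (k + 1) - 1 by omega, show k - 1 + 1 = k by omega]
        omega
      · simp at hlow
        omega
    · have := h.lt_choose_succ_top.trans_le
        (Nat.choose_le_choose (k + 1) (show c (k + 1) + 1 ≤ a + k - 1 by omega))
      omega

theorem descRank_dropLast_lt_partialShadowTilde {k r : ℕ} {l : List ℕ}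
    (hl : l.Pairwise (· ≥ ·)) (hpos : ∀ x ∈ l, 0 < x) (hlen : l.length = k) (hk : 1 ≤ k)
    (hlt : descRank l < r) : descRank l.dropLast < partialShadowTilde k r := by
  obtain ⟨t, c, hc⟩ := exists_isCascadeRep hk (by omega : 1 ≤ r)
  obtain ⟨t, c, hc, heq⟩ := Nat.sInf_mem (s := {s | ∃ t c, IsCascadeRep k r t c ∧
    s = ∑ i ∈ Icc t k, (c i - 1).choose (i - 1)}) ⟨_, t, c, hc, rfl⟩
  rw [partialShadowTilde, cascadeVal, heq]
  exact hc.descRank_dropLast_lt hl hpos hlen hlt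

theorem le_choose_of_partialShadowTilde_le {f : ℕ → ℕ}
    (hM : ∀ k, 1 ≤ k → partialShadowTilde (k + 1) (f k) ≤ f (k - 1)) {n : ℕ} (hn : f 0 ≤ n)
    (k : ℕ) : f k ≤ (n + k).choose (k + 1) := by
  induction k with
  | zero => simpa using hn
  | succ k ih =>
    by_contra! hgt
    -- the list `[n + 1, 1, …, 1]` of length `k + 2` has rank `C(n + k + 1, k + 2) < f (k + 1)`
    have hshadow := descRank_dropLast_lt_partialShadowTilde
      (k := k + 1 + 1) (l := (n + 1) :: List.replicate (k + 1) 1) (r := f (k + 1))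
      (by simp [List.pairwise_replicate]) (by simp) (by simp) (by omega)
      (by simpa [descRank_replicate_one, show n + 1 + (k + 1) - 1 = n + (k + 1) by omega])
    rw [List.dropLast_cons_of_ne_nil (by simp), List.dropLast_replicate] at hshadow
    have := hM (k + 1) (by omega)
    simp only [descRank_cons, List.length_replicate, descRank_replicate_one] at hshadow
    simp only [Nat.add_sub_cancel, show n + 1 + k - 1 = n + k by omega] at hshadow this
    omega

section Multisets

def descList (F : Multiset ℕ) : List ℕ := (Multiset.sort F (· ≤ ·)).reverse

def mrank (F : Multiset ℕ) : ℕ := descRank (descList F)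

lemma pairwise_descList (F : Multiset ℕ) : (descList F).Pairwise (· ≥ ·) := by
  simp [descList, List.pairwise_reverse, Multiset.pairwise_sort]

@[simp] lemma length_descList (F : Multiset ℕ) : (descList F).length = Multiset.card F := by
  simp [descList]

@[simp] lemma mem_descList {F : Multiset ℕ} {x : ℕ} : x ∈ descList F ↔ x ∈ F := by
  simp [descList]

lemma coe_reverse_descList (F : Multiset ℕ) : ((descList F).reverse : Multiset ℕ) = F := by
  simp [descList]

lemma descList_coe_reverse {l : List ℕ} (hl : l.Pairwise (· ≥ ·)) :
    descList (l.reverse : Multiset ℕ) = l := by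
  rw [descList, List.reverse_eq_iff]
  exact List.Perm.eq_of_pairwise' (Multiset.pairwise_sort _ _) (List.pairwise_reverse.2 hl)
    (Multiset.coe_eq_coe.1 (Multiset.sort_eq _ _))

lemma descList_sublist {F G : Multiset ℕ} (h : G ≤ F) : (descList G).Sublist (descList F) :=
  (List.sublist_of_subperm_of_pairwise (by simpa [← Multiset.coe_le] using h)
    (Multiset.pairwise_sort G _) (Multiset.pairwise_sort F _)).reverse

lemma mrevLexLT_iff {F G : Multiset ℕ} : MRevLexLT F G ↔ descList F < descList G := Iff.rfl

def multisetLayer (n c : ℕ) : Set (Multiset ℕ) :=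
  {F | (∀ x ∈ F, x ∈ Icc 1 n) ∧ Multiset.card F = c}

def revLexInitSeg (n c N : ℕ) : Set (Multiset ℕ) :=
  {F | F ∈ multisetLayer n c ∧ mrank F < N}

variable {n c : ℕ} {F G : Multiset ℕ}

lemma pos_of_mem_multisetLayer (hF : F ∈ multisetLayer n c) :
    ∀ x ∈ descList F, 0 < x :=
  fun x hx => (Finset.mem_Icc.1 (hF.1 x (mem_descList.1 hx))).1

lemma mrank_lt_mrank_iff (hF : F ∈ multisetLayer n c) (hG : G ∈ multisetLayer n c) :
    mrank F < mrank G ↔ MRevLexLT F G :=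
  descRank_lt_descRank_iff (pairwise_descList F) (pairwise_descList G)
    (pos_of_mem_multisetLayer hF) (pos_of_mem_multisetLayer hG) (by simp [hF.2, hG.2])

lemma injOn_mrank : Set.InjOn mrank (multisetLayer n c) := fun F hF G hG h => by
  rw [← coe_reverse_descList F, ← coe_reverse_descList G,
    descRank_injective (pairwise_descList F) (pairwise_descList G)
      (pos_of_mem_multisetLayer hF) (pos_of_mem_multisetLayer hG) (by simp [hF.2, hG.2]) h]

lemma image_mrank_multisetLayer :
    mrank '' multisetLayer n c = Set.Iio ((n + c - 1).choose c) := by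
  ext m
  constructor
  · rintro ⟨F, hF, rfl⟩
    rcases Multiset.empty_or_exists_mem F with rfl | ⟨x, hx⟩
    · simp [← hF.2, mrank, descList]
    · have hn : 0 < n := by have := Finset.mem_Icc.1 (hF.1 x hx); omega
      simpa [mrank, hF.2] using descRank_lt_choose (l := descList F) hn
        fun y hy => (Finset.mem_Icc.1 (hF.1 y (mem_descList.1 hy))).2
  · intro hm
    obtain ⟨l, hl, hmem, hlen, rfl⟩ := exists_descRank_eq hm
    exact ⟨l.reverse, ⟨by simpa using hmem, by simpa using hlen⟩,
      by rw [mrank, descList_coe_reverse hl]⟩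

lemma multisetLayer_finite : (multisetLayer n c).Finite :=
  Set.Finite.of_finite_image (by simp [image_mrank_multisetLayer]) injOn_mrank

lemma ncard_revLexInitSeg {N : ℕ} (hN : N ≤ (n + c - 1).choose c) :
    (revLexInitSeg n c N).ncard = N := by
  have himage : mrank '' revLexInitSeg n c N = Set.Iio N := by
    ext m
    constructor
    · rintro ⟨F, hF, rfl⟩
      exact hF.2
    · intro hm
      obtain ⟨F, hF, rfl⟩ : m ∈ mrank '' multisetLayer n c := by
        rw [image_mrank_multisetLayer]
        exact lt_of_lt_of_le hm hN
      exact ⟨F, ⟨hF, hm⟩, rfl⟩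
  rw [← (injOn_mrank.mono fun F hF => hF.1).ncard_image, himage,
    Set.ncard_Iio_nat]

theorem eq_revLexInitSeg {S : Set (Multiset ℕ)} {N : ℕ} (hS : S ⊆ multisetLayer n c)
    (hdown : ∀ F ∈ multisetLayer n c, ∀ G ∈ S, MRevLexLT F G → F ∈ S)
    (hN : N ≤ (n + c - 1).choose c) (hcard : S.ncard = N) : S = revLexInitSeg n c N := by
  have hseg := ncard_revLexInitSeg hN
  -- both sets are lower sets of the linearly ordered layer, hence comparable
  by_cases hsub : S ⊆ revLexInitSeg n c N
  · exact Set.eq_of_subset_of_ncard_le hsub (by omega)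
      (multisetLayer_finite.subset fun F hF => hF.1)
  · obtain ⟨G, hGS, hG⟩ := Set.not_subset.1 hsub
    have hG : N ≤ mrank G := by
      by_contra! h
      exact hG ⟨hS hGS, h⟩
    refine (Set.eq_of_subset_of_ncard_le (fun F hF => hdown F hF.1 G hGS ?_) (by omega)
      (multisetLayer_finite.subset hS)).symm
    exact (mrank_lt_mrank_iff hF.1 (hS hGS)).1 (by have := hF.2; omega)

end Multisets

lemma mem_of_le_of_forall_erase_mem {α : Type*} [DecidableEq α] {Δ : Set (Multiset α)}
    (h : ∀ F ∈ Δ, ∀ x ∈ F, F.erase x ∈ Δ) {F G : Multiset α} (hGF : G ≤ F) (hF : F ∈ Δ) :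
    G ∈ Δ := by
  obtain ⟨u, rfl⟩ := Multiset.le_iff_exists_add.1 hGF
  induction u using Multiset.induction_on with
  | empty => simpa using hF
  | cons a u ih =>
    rw [Multiset.add_cons] at hF
    exact ih (Multiset.le_add_right G u) (by simpa using h _ hF a (Multiset.mem_cons_self a _))

/-- `layerSize f c = f_{c-1}` is the prescribed number of multisets of cardinality `c`. -/
def layerSize (f : ℕ → ℕ) : ℕ → ℕ
  | 0 => 1
  | k + 1 => f k

def revLexMulticomplex (f : ℕ → ℕ) (n : ℕ) : Set (Multiset ℕ) :=
  {F | F ∈ revLexInitSeg n (Multiset.card F) (layerSize f (Multiset.card F))}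

section MSequence

variable {f : ℕ → ℕ} {n : ℕ}

lemma layerSize_le_choose (hM : ∀ k, 1 ≤ k → partialShadowTilde (k + 1) (f k) ≤ f (k - 1))
    (hn : f 0 ≤ n) (c : ℕ) : layerSize f c ≤ (n + c - 1).choose c := by
  cases c with
  | zero => simp [layerSize]
  | succ k => simpa [layerSize] using le_choose_of_partialShadowTilde_le hM hn k

lemma revLexMulticomplex_layer (c : ℕ) :
    {F ∈ revLexMulticomplex f n | Multiset.card F = c} = revLexInitSeg n c (layerSize f c) := by
  ext F
  constructor
  · rintro ⟨hF, rfl⟩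
    exact hF
  · intro hF
    have hc := hF.1.2
    subst hc
    exact ⟨hF, rfl⟩

lemma erase_mem_revLexMulticomplex
    (hM : ∀ k, 1 ≤ k → partialShadowTilde (k + 1) (f k) ≤ f (k - 1))
    {F : Multiset ℕ} (hF : F ∈ revLexMulticomplex f n) {x : ℕ} (hx : x ∈ F) :
    F.erase x ∈ revLexMulticomplex f n := by
  obtain ⟨⟨hent, -⟩, hrank⟩ := hF
  have hent' : ∀ y ∈ F.erase x, y ∈ Icc 1 n := fun y hy => hent y (Multiset.mem_of_mem_erase hy)
  refine ⟨⟨hent', rfl⟩, ?_⟩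
  have hcard := Multiset.card_erase_add_one hx
  rcases hk : Multiset.card (F.erase x) with _ | k
  · simp [Multiset.card_eq_zero.1 hk, layerSize, mrank, descList]
  rw [hk] at hcard
  rw [← hcard] at hrank
  have hFl : F ∈ multisetLayer n (k + 1 + 1) := ⟨hent, hcard.symm⟩
  have hshadow := descRank_dropLast_lt_partialShadowTilde (k := k + 1 + 1)
    (pairwise_descList F) (pos_of_mem_multisetLayer hFl) (by simp [hcard]) (by omega) hrank
  have hsub : mrank (F.erase x) ≤ descRank (descList F).dropLast :=
    (descRank_le_descRank_iff (pairwise_descList _)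
      ((pairwise_descList F).sublist (List.dropLast_sublist _))
      (pos_of_mem_multisetLayer (c := k + 1) ⟨hent', hk⟩)
      (fun y hy => pos_of_mem_multisetLayer hFl y (List.dropLast_subset _ hy))
      (by simp [hk, ← hcard])).2
    (le_dropLast_of_sublist (pairwise_descList F) (descList_sublist (Multiset.erase_le x F))
      (by simp [hk, ← hcard]))
  have := hM (k + 1) le_add_self
  simp only [layerSize, Nat.add_sub_cancel] at this ⊢
  exact hsub.trans_lt (hshadow.trans_le this)

theorem multicomplexOn_revLexMulticomplex
    (hM : ∀ k, 1 ≤ k → partialShadowTilde (k + 1) (f k) ≤ f (k - 1)) :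
    MulticomplexOn n (revLexMulticomplex f n) :=
  ⟨fun _ hF => hF.1.1, fun _ hF _ hGF =>
    mem_of_le_of_forall_erase_mem (fun _ hF _ hx => erase_mem_revLexMulticomplex hM hF hx) hGF hF⟩

theorem isCompressedMulti_revLexMulticomplex : IsCompressedMulti n (revLexMulticomplex f n) := by
  rintro F G hFn hG hcard (rfl | hFG)
  · exact hG
  · have hG' : G ∈ multisetLayer n (Multiset.card F) := ⟨hG.1.1, hcard.symm⟩
    refine ⟨⟨hFn, rfl⟩, ?_⟩
    rw [hcard]
    exact ((mrank_lt_mrank_iff ⟨hFn, rfl⟩ hG').2 hFG).trans hG.2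

theorem layer_eq_revLexInitSeg_of_isCompressedMulti {Δ : Set (Multiset ℕ)}
    (hΔ : ∀ F ∈ Δ, ∀ x ∈ F, x ∈ Icc 1 n) (hcomp : IsCompressedMulti n Δ) {c N : ℕ}
    (hN : N ≤ (n + c - 1).choose c) (hcount : mFaceCount Δ c = N) :
    {F ∈ Δ | Multiset.card F = c} = revLexInitSeg n c N :=
  eq_revLexInitSeg (fun F hF => ⟨hΔ F hF.1, hF.2⟩)
    (fun F hF G hG hFG => ⟨hcomp F G hF.1 hG.1 (hF.2.trans hG.2.symm) (.inr hFG), hF.2⟩) hN hcount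

end MSequence

/-- for every M-sequence `f` and `n ≥ f_0` there is a unique compressed
multicomplex on `[n]` with `f`-vector `f`. -/
theorem statement6 (f : ℕ → ℕ)
    (hM : ∀ k, 1 ≤ k → partialShadowTilde (k + 1) (f k) ≤ f (k - 1))
    (n : ℕ) (hn : f 0 ≤ n) :
    ∃! Δ : Set (Multiset ℕ), MulticomplexOn n Δ ∧ IsCompressedMulti n Δ ∧
      mFaceCount Δ 0 = 1 ∧ ∀ k, mFaceCount Δ (k + 1) = f k := by
  have hcount (c : ℕ) : mFaceCount (revLexMulticomplex f n) c = layerSize f c := by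
    rw [mFaceCount, revLexMulticomplex_layer, ncard_revLexInitSeg (layerSize_le_choose hM hn c)]
  refine ⟨revLexMulticomplex f n, ⟨multicomplexOn_revLexMulticomplex hM,
    isCompressedMulti_revLexMulticomplex, hcount 0, fun k => hcount (k + 1)⟩, ?_⟩
  rintro Δ ⟨hΔ, hcomp, h0, hsucc⟩
  have hlayer (c : ℕ) : {F ∈ Δ | Multiset.card F = c} = revLexInitSeg n c (layerSize f c) :=
    layer_eq_revLexInitSeg_of_isCompressedMulti hΔ.1 hcomp (layerSize_le_choose hM hn c)
      (by cases c <;> simp [layerSize, h0, hsucc])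
  ext F
  have := congrArg (F ∈ ·) ((hlayer (Multiset.card F)).trans
    (revLexMulticomplex_layer (Multiset.card F)).symm)
  simpa using this
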